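/- arXiv:1707.09477 — 5 statements merged into one kernel-verified Lean document; each statement's English description precedes it below -/
import Mathlib

section
/- For any nonzero real number α, the quotient Q(α,m) := (∑_{n=1}^m ⌊αn⌋^3) / (∑_{n=1}^m ⌊αn⌋)^2 tends to α as m → ∞. -/
/-!
Since `⌊αn⌋ = αn + O(1)`, the power sums of `⌊αn⌋` differ from those of `αn` by lower order
terms: `∑ ⌊αn⌋ = αm²/2 + O(m)` and `∑ ⌊αn⌋³ = α³m⁴/4 + O(m³)`. Hence
`Q(α, m) → (α³/4) / (α/2)² = α`, the denominator limit being nonzero because `α ≠ 0`.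
-/

noncomputable def Q (α : ℝ) (m : ℕ) : ℝ :=
  (∑ n ∈ Finset.Icc 1 m, (⌊α * n⌋ : ℝ) ^ 3) / (∑ n ∈ Finset.Icc 1 m, (⌊α * n⌋ : ℝ)) ^ 2

open Finset Filter Topology

lemma abs_intFloor_sub_le {R : Type*} [Ring R] [LinearOrder R] [IsStrictOrderedRing R]
    [FloorRing R] (a : R) : |(⌊a⌋ : R) - a| ≤ 1 := by
  rw [abs_sub_comm, Int.self_sub_floor, Int.abs_fract]
  exact (Int.fract_lt_one a).le

lemma abs_pow_three_sub_pow_three_le {R : Type*} [CommRing R] [LinearOrder R]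
    [IsStrictOrderedRing R] {x y : R} (h : |x - y| ≤ 1) :
    |x ^ 3 - y ^ 3| ≤ 3 * (|y| + 1) ^ 2 := by
  have hx : |x| ≤ |y| + 1 := by
    calc |x| = |y + (x - y)| := by rw [add_sub_cancel]
      _ ≤ |y| + 1 := (abs_add_le _ _).trans (by gcongr)
  have hquad : |x ^ 2 + x * y + y ^ 2| ≤ 3 * (|y| + 1) ^ 2 := by
    calc |x ^ 2 + x * y + y ^ 2| ≤ |x| ^ 2 + |x| * |y| + |y| ^ 2 := by
          rw [← abs_mul, ← abs_pow, ← abs_pow]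
          exact (abs_add_le _ _).trans (add_le_add_left (abs_add_le _ _) _)
      _ ≤ 3 * (|y| + 1) ^ 2 := by
          nlinarith [mul_le_mul hx hx (abs_nonneg x) (by positivity),
            mul_le_mul_of_nonneg_right hx (abs_nonneg y), abs_nonneg y]
  calc |x ^ 3 - y ^ 3| = |x - y| * |x ^ 2 + x * y + y ^ 2| := by
        rw [← abs_mul]
        congr 1
        ring
    _ ≤ 1 * (3 * (|y| + 1) ^ 2) := mul_le_mul h hquad (abs_nonneg _) zero_le_one
    _ = 3 * (|y| + 1) ^ 2 := one_mul _

lemma sum_Icc_id (m : ℕ) : ∑ n ∈ Icc 1 m, (n : ℝ) = m * (m + 1) / 2 := by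
  induction m with
  | zero => simp
  | succ k ih =>
    rw [sum_Icc_succ_top (by omega), ih]
    push_cast; ring

lemma sum_Icc_pow_three (m : ℕ) : ∑ n ∈ Icc 1 m, (n : ℝ) ^ 3 = (m * (m + 1) / 2) ^ 2 := by
  induction m with
  | zero => simp
  | succ k ih =>
    rw [sum_Icc_succ_top (by omega), ih]
    push_cast; ring

lemma tendsto_mul_succ_div_two_div_sq :
    Tendsto (fun m : ℕ => (m : ℝ) * (m + 1) / 2 / m ^ 2) atTop (𝓝 (1 / 2)) := by
  have h := (tendsto_one_div_atTop_nhds_zero_nat.const_add 1).const_mul (1 / 2 : ℝ)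
  rw [add_zero, mul_one] at h
  refine h.congr' ?_
  filter_upwards [eventually_ne_atTop 0] with m hm
  field_simp

lemma tendsto_sum_Icc_mul_div_sq (α : ℝ) :
    Tendsto (fun m : ℕ => (∑ n ∈ Icc 1 m, α * n) / m ^ 2) atTop (𝓝 (α / 2)) := by
  have h := tendsto_mul_succ_div_two_div_sq.const_mul α
  rw [mul_one_div] at h
  refine h.congr fun m => ?_
  rw [← mul_sum, sum_Icc_id]
  ring

lemma tendsto_sum_Icc_mul_pow_three_div_pow_four (α : ℝ) :
    Tendsto (fun m : ℕ => (∑ n ∈ Icc 1 m, (α * n) ^ 3) / m ^ 4) atTop (𝓝 (α ^ 3 / 4)) := by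
  have h := (tendsto_mul_succ_div_two_div_sq.pow 2).const_mul (α ^ 3)
  rw [show α ^ 3 * (1 / 2) ^ 2 = α ^ 3 / 4 by ring] at h
  refine h.congr fun m => ?_
  simp_rw [mul_pow, ← mul_sum, sum_Icc_pow_three]
  ring

lemma abs_sum_Icc_sub_le {a b : ℕ → ℝ} {p : ℕ} {C : ℝ}
    (hab : ∀ n, 1 ≤ n → |a n - b n| ≤ C * n ^ p) (m : ℕ) :
    |∑ n ∈ Icc 1 m, (a n - b n)| ≤ C * m ^ (p + 1) := by
  have hC : 0 ≤ C := by simpa using (abs_nonneg _).trans (hab 1 le_rfl)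
  calc |∑ n ∈ Icc 1 m, (a n - b n)| ≤ ∑ n ∈ Icc 1 m, |a n - b n| := abs_sum_le_sum_abs _ _
    _ ≤ ∑ _n ∈ Icc 1 m, C * m ^ p := by
        refine sum_le_sum fun n hn => (hab n (mem_Icc.1 hn).1).trans ?_
        gcongr
        exact_mod_cast (mem_Icc.1 hn).2
    _ = C * m ^ (p + 1) := by
        rw [sum_const, Nat.card_Icc, nsmul_eq_mul, add_tsub_cancel_right]
        ring

lemma tendsto_sum_Icc_div_pow_of_abs_sub_le {a b : ℕ → ℝ} {p : ℕ} {C L : ℝ}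
    (hab : ∀ n, 1 ≤ n → |a n - b n| ≤ C * n ^ p)
    (hb : Tendsto (fun m : ℕ => (∑ n ∈ Icc 1 m, b n) / m ^ (p + 2)) atTop (𝓝 L)) :
    Tendsto (fun m : ℕ => (∑ n ∈ Icc 1 m, a n) / m ^ (p + 2)) atTop (𝓝 L) := by
  have herr : Tendsto (fun m : ℕ => (∑ n ∈ Icc 1 m, (a n - b n)) / m ^ (p + 2)) atTop (𝓝 0) := by
    refine squeeze_zero_norm' ?_ (tendsto_const_div_atTop_nhds_zero_nat C)
    filter_upwards [eventually_ne_atTop 0] with m hm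
    have hm : (0 : ℝ) < m := by positivity
    rw [Real.norm_eq_abs, abs_div, abs_of_pos (by positivity : (0 : ℝ) < m ^ (p + 2)),
      div_le_div_iff₀ (by positivity) hm]
    calc |∑ n ∈ Icc 1 m, (a n - b n)| * m ≤ C * m ^ (p + 1) * m := by
          gcongr; exact abs_sum_Icc_sub_le hab m
      _ = C * m ^ (p + 2) := by ring
  refine (add_zero L ▸ hb.add herr).congr fun m => ?_
  rw [← add_div, ← sum_add_distrib]
  simp only [add_sub_cancel]

lemma tendsto_sum_Icc_floor_div_sq (α : ℝ) :
    Tendsto (fun m : ℕ => (∑ n ∈ Icc 1 m, (⌊α * n⌋ : ℝ)) / m ^ 2) atTop (𝓝 (α / 2)) :=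
  tendsto_sum_Icc_div_pow_of_abs_sub_le (p := 0) (C := 1)
    (fun n _ => by simpa using abs_intFloor_sub_le (α * n)) (tendsto_sum_Icc_mul_div_sq α)

lemma tendsto_sum_Icc_floor_pow_three_div_pow_four (α : ℝ) :
    Tendsto (fun m : ℕ => (∑ n ∈ Icc 1 m, (⌊α * n⌋ : ℝ) ^ 3) / m ^ 4) atTop
      (𝓝 (α ^ 3 / 4)) := by
  refine tendsto_sum_Icc_div_pow_of_abs_sub_le (p := 2) (C := 3 * (|α| + 1) ^ 2)
    (fun n hn => ?_) (tendsto_sum_Icc_mul_pow_three_div_pow_four α)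
  have hn : (1 : ℝ) ≤ n := by exact_mod_cast hn
  refine (abs_pow_three_sub_pow_three_le (abs_intFloor_sub_le (α * n))).trans ?_
  calc 3 * (|α * n| + 1) ^ 2 ≤ 3 * ((|α| + 1) * n) ^ 2 := by
        rw [abs_mul, Nat.abs_cast]
        gcongr
        linarith
    _ = 3 * (|α| + 1) ^ 2 * n ^ 2 := by ring

theorem Q_tendsto (α : ℝ) (hα : α ≠ 0) :
    Filter.Tendsto (fun m => Q α m) Filter.atTop (nhds α) := by
  have hlim := (tendsto_sum_Icc_floor_pow_three_div_pow_four α).div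
    ((tendsto_sum_Icc_floor_div_sq α).pow 2) (by positivity)
  rw [show α ^ 3 / 4 / (α / 2) ^ 2 = α by field_simp; ring] at hlim
  refine hlim.congr' ?_
  filter_upwards [eventually_ne_atTop 0] with m hm
  rw [Pi.div_apply, Q, div_pow, ← pow_mul, div_div_div_cancel_right₀ (by positivity)]
end

section
/- For every integer k ≥ 2 and every integer n with 1 ≤ n ≤ F_{k−1} − 1, one has ⌊φ(F_k + n)⌋ = F_{k+1} + ⌊φ n⌋. -/
noncomputable def ph : ℝ := (1 + Real.sqrt 5) / 2
noncomputable def ps : ℝ := (1 - Real.sqrt 5) / 2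

lemma s5 : Real.sqrt 5 ^ 2 = 5 := Real.sq_sqrt (by norm_num)
lemma s5gt : 2 < Real.sqrt 5 := by nlinarith [s5, Real.sqrt_nonneg 5]
lemma s5lt : Real.sqrt 5 < 2.25 := by nlinarith [s5, Real.sqrt_nonneg 5]

lemma abs_ps : |ps| = (Real.sqrt 5 - 1) / 2 := by
  rw [abs_of_neg (by unfold ps; nlinarith [s5gt])]; unfold ps; ring

lemma abs_ps_lt : |ps| < 1 := by rw [abs_ps]; nlinarith [s5lt]
lemma abs_ps_pos : 0 < |ps| := by rw [abs_ps]; nlinarith [s5gt]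
lemma ps_sq : ps ^ 2 = ps + 1 := by unfold ps; nlinarith [s5]
lemma abs_ps_sq : |ps| ^ 2 = 1 - |ps| := by rw [abs_ps]; nlinarith [s5]

lemma fib_phi (j : ℕ) : ph * (Nat.fib j : ℝ) = (Nat.fib (j+1) : ℝ) - ps ^ j := by
  induction j using Nat.twoStepInduction with
  | zero => simp [ph]
  | one => simp [ph, ps]; ring
  | more j ih1 ih2 =>
    have e3 : (Nat.fib (j+2) : ℝ) = Nat.fib j + Nat.fib (j+1) := by
      rw [Nat.fib_add_two]; push_cast; ring
    have e4 : (Nat.fib (j+3) : ℝ) = Nat.fib (j+1) + Nat.fib (j+2) := by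
      rw [show j+3 = (j+1)+2 by ring, Nat.fib_add_two]; push_cast; ring
    rw [show j+2+1 = j+3 from rfl, e3, e4, mul_add, ih1, ih2]
    linear_combination (ps^j) * ps_sq

lemma approx : ∀ m : ℕ, ∀ n : ℕ, 1 ≤ n → n < Nat.fib (m+1) →
    ∀ z : ℤ, |ps|^m ≤ |(n:ℝ) * ph - z| := by
  intro m
  induction m using Nat.strong_induction_on with
  | _ m ih =>
  match m with
  | 0 => intro n h1 h2 z; simp [Nat.fib] at h2; omega
  | 1 => intro n h1 h2 z; norm_num [Nat.fib] at h2; omega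
  | 2 =>
    intro n h1 h2 z
    have : n = 1 := by norm_num [show Nat.fib 3 = 2 from rfl] at h2; omega
    subst this
    push_cast
    rw [one_mul]
    rcases le_or_gt z 1 with h | h
    · have hz : (z:ℝ) ≤ 1 := by exact_mod_cast h
      have h1 : ph - (z:ℝ) ≤ |ph - z| := le_abs_self _
      rw [abs_ps_sq, abs_ps]
      unfold ph at *
      nlinarith [s5gt]
    · have hz : (2:ℝ) ≤ (z:ℝ) := by exact_mod_cast h
      have h1 : -(ph - (z:ℝ)) ≤ |ph - z| := neg_le_abs _
      rw [abs_ps_sq, abs_ps]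
      unfold ph at *
      nlinarith [s5gt]
  | (m+3) =>
    intro n h1 h2 z
    rcases lt_or_ge n (Nat.fib (m+3)) with h | h
    · calc |ps|^(m+3) ≤ |ps|^(m+2) :=
            pow_le_pow_of_le_one (abs_nonneg _) abs_ps_lt.le (by omega)
        _ ≤ _ := ih (m+2) (by omega) n h1 h z
    · have hfib : Nat.fib (m+4) = Nat.fib (m+2) + Nat.fib (m+3) := Nat.fib_add_two
      have h2' : n < Nat.fib (m+4) := by rwa [show m+3+1 = m+4 by omega] at h2
      set r := n - Nat.fib (m+3) with hr
      have hrlt : r < Nat.fib (m+2) := by omega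
      have hnr : (n:ℝ) = (r:ℝ) + (Nat.fib (m+3) : ℝ) := by
        have : n = r + Nat.fib (m+3) := by omega
        rw [this]; push_cast; ring
      have key : (n:ℝ) * ph - z = ((r:ℝ) * ph - ((z:ℤ) - (Nat.fib (m+4) : ℤ))) - ps^(m+3) := by
        have := fib_phi (m+3)
        rw [hnr]; push_cast; push_cast at this; linarith [this]
      rcases Nat.eq_zero_or_pos r with h0 | hrpos
      · rw [key, h0]
        push_cast
        rcases eq_or_ne z ((Nat.fib (m+4) : ℤ)) with he | he
        · rw [he]
          simp [abs_pow]
        · have h1' : (1:ℝ) ≤ |(z:ℝ) - (Nat.fib (m+4) : ℝ)| := by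
            have h1'' : (1:ℤ) ≤ |z - (Nat.fib (m+4) : ℤ)| :=
              Int.one_le_abs (by omega)
            exact_mod_cast h1''
          have hps : |ps|^(m+3) ≤ |ps|^2 * |ps| := by
            calc |ps|^(m+3) ≤ |ps|^3 := pow_le_pow_of_le_one (abs_nonneg _) abs_ps_lt.le (by omega)
              _ = |ps|^2 * |ps| := by ring
          have hhalf : |ps|^(m+3) ≤ 1/2 := by
            rw [abs_ps_sq] at hps; nlinarith [abs_ps_pos, abs_ps_lt, sq_nonneg (|ps| - 1/2)]
          have habs : |ps^(m+3)| = |ps|^(m+3) := abs_pow _ _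
          have htri := abs_sub_abs_le_abs_sub (0 * ph - ((z:ℝ) - (Nat.fib (m+4) : ℝ))) (ps^(m+3))
          have habs0 : |0 * ph - ((z:ℝ) - (Nat.fib (m+4) : ℝ))| = |(z:ℝ) - (Nat.fib (m+4) : ℝ)| := by
            rw [zero_mul, zero_sub, abs_neg]
          rw [habs0, habs] at htri
          linarith
      · have hind := ih (m+1) (by omega) r hrpos hrlt (z - (Nat.fib (m+4) : ℤ))
        rw [key]
        have habs : |ps^(m+3)| = |ps|^(m+3) := abs_pow _ _
        have e1 : |ps|^(m+3) = |ps|^(m+1) * |ps|^2 := by ring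
        have e2 : |ps|^(m+2) = |ps|^(m+1) * |ps| := by ring
        have h3 : |ps|^(m+1) - |ps|^(m+3) = |ps|^(m+2) := by
          rw [e1, e2, abs_ps_sq]; ring
        have h4 : |ps|^(m+3) ≤ |ps|^(m+2) :=
          pow_le_pow_of_le_one (abs_nonneg _) abs_ps_lt.le (by omega)
        have hcast : ((z - (Nat.fib (m+4) : ℤ) : ℤ) : ℝ) = (z:ℝ) - (Nat.fib (m+4) : ℝ) := by
          push_cast; ring
        rw [hcast] at hind
        calc |ps|^(m+3) ≤ |ps|^(m+2) := h4
          _ = |ps|^(m+1) - |ps|^(m+3) := h3.symm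
          _ ≤ |(r:ℝ) * ph - ((z:ℝ) - (Nat.fib (m+4):ℝ))| - |ps^(m+3)| := by rw [habs]; linarith
          _ ≤ _ := abs_sub_abs_le_abs_sub _ _ |>.trans (le_of_eq rfl)

theorem floor_phi_fib_add (k n : ℕ) (hk : 2 ≤ k) (hn : 1 ≤ n) (hn' : n ≤ Nat.fib (k - 1) - 1) :
    ⌊(1 + Real.sqrt 5) / 2 * ((Nat.fib k : ℝ) + n)⌋ =
      (Nat.fib (k + 1) : ℤ) + ⌊(1 + Real.sqrt 5) / 2 * (n : ℝ)⌋ := by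
  have hfk : 2 ≤ Nat.fib (k-1) := by omega
  have hk4 : 4 ≤ k := by
    by_contra hc
    push_neg at hc
    interval_cases k <;> simp_all [Nat.fib]
  have hlt : n < Nat.fib (k-1) := by omega
  have hlt' : n < Nat.fib ((k-2)+1) := by rwa [show (k-2)+1 = k-1 by omega]
  have happ := approx (k-2) n hn hlt'
  set z : ℤ := ⌊ph * (n:ℝ)⌋ with hz
  have hz1 : (z:ℝ) ≤ ph * n := Int.floor_le _
  have hz2 : ph * n < (z:ℝ) + 1 := Int.lt_floor_add_one _
  have ha1 := happ z
  have ha2 := happ (z+1)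
  have hcomm : (n:ℝ) * ph = ph * n := mul_comm _ _
  rw [hcomm] at ha1 ha2
  have hc1 : ((z+1 : ℤ) : ℝ) = (z:ℝ) + 1 := by push_cast; ring
  rw [hc1] at ha2
  have ha1' : |ps|^(k-2) ≤ ph * (n:ℝ) - (z:ℝ) := by
    have h0 : (0:ℝ) ≤ ph * (n:ℝ) - (z:ℝ) := by linarith
    rwa [abs_of_nonneg h0] at ha1
  have ha2' : ph * (n:ℝ) - ((z:ℝ)+1) ≤ -(|ps|^(k-2)) := by
    have h0 : ph * (n:ℝ) - ((z:ℝ)+1) ≤ 0 := by linarith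
    rw [abs_of_nonpos h0] at ha2
    linarith
  -- so: z + |ps|^(k-2) ≤ ph*n ≤ z + 1 - |ps|^(k-2)
  have hpk : |ps|^k = |ps|^(k-2) * |ps|^2 := by
    rw [← pow_add]; congr 1; omega
  have hpow_pos : (0:ℝ) < |ps|^(k-2) := pow_pos abs_ps_pos _
  have hps_bounds : -(|ps|^(k-2)) < ps^k ∧ ps^k < |ps|^(k-2) := by
    constructor
    · have : |ps^k| ≤ |ps|^k := by rw [abs_pow]
      have h2 : |ps|^k < |ps|^(k-2) := by
        rw [hpk]; nlinarith [abs_ps_sq, abs_ps_lt, abs_ps_pos]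
      have := neg_abs_le (ps^k)
      linarith
    · have : ps^k ≤ |ps^k| := le_abs_self _
      have h2 : |ps|^k < |ps|^(k-2) := by
        rw [hpk]; nlinarith [abs_ps_sq, abs_ps_lt, abs_ps_pos]
      rw [abs_pow] at this
      linarith
  have hmain : ph * ((Nat.fib k : ℝ) + n) = ((Nat.fib (k+1) : ℤ) : ℝ) + (ph * n - ps ^ k) := by
    have := fib_phi k
    push_cast
    push_cast at this
    nlinarith [this]
  have e2 : ⌊ph * n - ps ^ k⌋ = z := by
    rw [Int.floor_eq_iff]
    constructor
    · obtain ⟨hb1, hb2⟩ := hps_bounds; linarith [ha1']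
    · obtain ⟨hb1, hb2⟩ := hps_bounds; linarith [ha2']
  have : ⌊ph * ((Nat.fib k : ℝ) + n)⌋ = (Nat.fib (k+1) : ℤ) + z := by
    rw [hmain, Int.floor_intCast_add, e2]
  show ⌊ph * ((Nat.fib k : ℝ) + n)⌋ = (Nat.fib (k + 1) : ℤ) + ⌊ph * (n : ℝ)⌋
  rw [this, hz]
end

section
/- For every integer k ≥ 1, ∑_{n=1}^{F_k − 1} ⌊φ n⌋ = (1/2)(F_{k+1} − 1)(F_k − 1). -/
/-!
For `0 < n < F_k` one has `φ n + φ (F_k - n) = φ F_k = F_{k+1} - ψ^k`. Writing `n` and any integer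
`p` in the unimodular basis `(F_{k-1}, F_k), (F_{k-2}, F_{k-1})` as `n = a F_{k-1} + b F_{k-2}`
gives `φ n - p = -ψ^{k-2} (a ψ + b)`, where `a b ≤ 0` because `0 < n < F_{k-1} + F_{k-2}`; so `φ n`
is farther than `|ψ|^k` from every integer. Both fractional parts `{φ n}` and `{φ (F_k - n)}` thus
lie in `(|ψ|^k, 1 - |ψ|^k)`, which forces the integer
`⌊φ n⌋ + ⌊φ (F_k - n)⌋ = F_{k+1} - ψ^k - {φ n} - {φ (F_k - n)}` to be `F_{k+1} - 1`.
Pairing `n` with `F_k - n` then doubles the sum.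
-/

open Real goldenRatio Finset

lemma exists_fib_coords (m : ℕ) (n p : ℤ) :
    ∃ a b : ℤ, n = a * Nat.fib (m + 1) + b * Nat.fib m ∧
      p = a * Nat.fib (m + 2) + b * Nat.fib (m + 1) := by
  induction m with
  | zero => exact ⟨n, p - n, by simp, by simp⟩
  | succ m ih =>
    obtain ⟨a, b, hn, hp⟩ := ih
    refine ⟨b, a - b, ?_, ?_⟩ <;> push_cast [Nat.fib_add_two] at * <;> linarith

lemma goldenRatio_mul_fib (n : ℕ) : φ * Nat.fib n = Nat.fib (n + 1) - ψ ^ n := by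
  linarith [fib_succ_sub_goldenRatio_mul_fib n]

lemma goldenRatio_mul_sub_of_fib_coords (m : ℕ) (a b : ℤ) :
    φ * (a * Nat.fib (m + 1) + b * Nat.fib m : ℤ) -
        (a * Nat.fib (m + 2) + b * Nat.fib (m + 1) : ℤ) = -ψ ^ m * (a * ψ + b) := by
  push_cast
  linear_combination (a : ℝ) * goldenRatio_mul_fib (m + 1) + (b : ℝ) * goldenRatio_mul_fib m

lemma abs_goldenConj_le_abs_mul_goldenConj_add {a b : ℤ} (hab : a * b ≤ 0)
    (hne : a ≠ 0 ∨ b ≠ 0) : |ψ| ≤ |a * ψ + b| := by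
  have hψ := goldenConj_neg
  have hψ' := neg_one_lt_goldenConj
  rw [abs_of_neg hψ]
  rcases lt_trichotomy a 0 with ha | rfl | ha
  · have hb : 0 ≤ b := by nlinarith
    have ha' : (a : ℝ) ≤ -1 := by exact_mod_cast Int.le_sub_one_of_lt ha
    have hb' : (0 : ℝ) ≤ b := by exact_mod_cast hb
    rw [abs_of_pos (by nlinarith)]; nlinarith
  · have hb : b ≠ 0 := by simpa using hne
    have : (1 : ℝ) ≤ |(b : ℝ)| := by exact_mod_cast Int.one_le_abs hb
    rw [Int.cast_zero, zero_mul, zero_add]; linarith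
  · have hb : b ≤ 0 := by nlinarith
    have ha' : (1 : ℝ) ≤ a := by exact_mod_cast ha
    have hb' : (b : ℝ) ≤ 0 := by exact_mod_cast hb
    rw [abs_of_neg (by nlinarith)]; nlinarith

lemma abs_goldenConj_pow_lt_abs_goldenRatio_mul_sub {k n : ℕ} (hn : 0 < n) (hnk : n < Nat.fib k)
    (p : ℤ) : |ψ| ^ k < |φ * n - p| := by
  have hk : 2 ≤ k := by
    by_contra! hk
    have : Nat.fib k ≤ 1 := Nat.fib_one ▸ Nat.fib_mono (by omega)
    omega
  obtain ⟨m, rfl⟩ := Nat.exists_eq_add_of_le' hk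
  obtain ⟨a, b, han, rfl⟩ := exists_fib_coords m n p
  have hab : a * b ≤ 0 := by
    have hfib := Nat.fib_add_two (n := m)
    have h1 : (0 : ℤ) < Nat.fib (m + 1) := by exact_mod_cast Nat.fib_pos.mpr m.succ_pos
    have h0 : (0 : ℤ) ≤ Nat.fib m := by positivity
    by_contra! h
    rcases mul_pos_iff.mp h with ⟨ha, hb⟩ | ⟨ha, hb⟩
    · zify [hfib] at hnk; nlinarith
    · zify at hn; nlinarith
  have hne : a ≠ 0 ∨ b ≠ 0 := by
    by_contra! h
    simp only [h.1, h.2, zero_mul, add_zero, Int.natCast_eq_zero] at han; omega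
  have hψ0 : 0 < |ψ| := abs_pos.mpr goldenConj_ne_zero
  have hψ1 : |ψ| < 1 := abs_lt.mpr ⟨neg_one_lt_goldenConj, by linarith [goldenConj_neg]⟩
  calc |ψ| ^ (m + 2) < |ψ| ^ m * |ψ| := by
        rw [pow_succ, pow_succ, mul_assoc]; gcongr; nlinarith
    _ ≤ |ψ| ^ m * |a * ψ + b| := by
        gcongr _ * ?_; exact abs_goldenConj_le_abs_mul_goldenConj_add hab hne
    _ = _ := by
        rw [← Int.cast_natCast, han, goldenRatio_mul_sub_of_fib_coords, abs_mul, abs_neg, abs_pow]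

lemma lt_fract_and_fract_lt_of_forall_lt_abs_sub {x ε : ℝ} (h : ∀ p : ℤ, ε < |x - p|) :
    ε < Int.fract x ∧ Int.fract x < 1 - ε := by
  have h₀ := h ⌊x⌋
  have h₁ := h (⌊x⌋ + 1)
  rw [Int.self_sub_floor, abs_of_nonneg (Int.fract_nonneg x)] at h₀
  rw [Int.cast_add, Int.cast_one, ← sub_sub, Int.self_sub_floor,
    abs_of_neg (by linarith [Int.fract_lt_one x])] at h₁
  exact ⟨h₀, by linarith⟩

lemma floor_add_floor_eq_of_add_eq {x y e : ℝ} {N : ℤ} (hxy : x + y = N - e)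
    (hx : |e| < Int.fract x) (hy : Int.fract y < 1 - |e|) : ⌊x⌋ + ⌊y⌋ = N - 1 := by
  rw [← Int.self_sub_floor] at hx hy
  have hlt : ⌊x⌋ + ⌊y⌋ < N := (Int.cast_lt (R := ℝ)).mp <| by
    push_cast; linarith [Int.floor_le y, neg_abs_le e]
  have hgt : N < ⌊x⌋ + ⌊y⌋ + 2 := (Int.cast_lt (R := ℝ)).mp <| by
    push_cast; linarith [Int.lt_floor_add_one x, le_abs_self e]
  omega

lemma floor_goldenRatio_mul_add_floor_goldenRatio_mul_fib_sub {k n : ℕ} (hn : 0 < n)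
    (hnk : n < Nat.fib k) :
    ⌊φ * n⌋ + ⌊φ * (Nat.fib k - n : ℕ)⌋ = Nat.fib (k + 1) - 1 := by
  have hsum : φ * n + φ * (Nat.fib k - n : ℕ) = (Nat.fib (k + 1) : ℤ) - ψ ^ k := by
    rw [Nat.cast_sub hnk.le, Int.cast_natCast, ← goldenRatio_mul_fib]; ring
  refine floor_add_floor_eq_of_add_eq hsum ?_ ?_ <;> rw [abs_pow]
  · exact (lt_fract_and_fract_lt_of_forall_lt_abs_sub
      (abs_goldenConj_pow_lt_abs_goldenRatio_mul_sub hn hnk)).1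
  · exact (lt_fract_and_fract_lt_of_forall_lt_abs_sub
      (abs_goldenConj_pow_lt_abs_goldenRatio_mul_sub (by omega) (by omega))).2

lemma two_nsmul_sum_Ico_one_of_add_reflect {M : Type*} [AddCommMonoid M] {f : ℕ → M} {N : ℕ}
    {c : M} (h : ∀ n ∈ Ico 1 N, f n + f (N - n) = c) :
    2 • ∑ n ∈ Ico 1 N, f n = (N - 1) • c := by
  have hreflect : ∑ n ∈ Ico 1 N, f (N - n) = ∑ n ∈ Ico 1 N, f n := by
    rw [sum_Ico_reflect f 1 N.le_succ, Nat.add_sub_cancel_left, Nat.add_sub_cancel]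
  rw [two_nsmul]
  nth_rw 2 [← hreflect]
  rw [← sum_add_distrib, sum_congr rfl h, sum_const, Nat.card_Ico]

theorem A_k_one_general (k : ℕ) :
    (∑ n ∈ Finset.Icc 1 (Nat.fib k - 1), (⌊(1 + Real.sqrt 5) / 2 * (n : ℝ)⌋ : ℝ)) =
      (1 / 2) * ((Nat.fib (k + 1) : ℝ) - 1) * ((Nat.fib k : ℝ) - 1) := by
  change ∑ n ∈ Icc 1 (Nat.fib k - 1), (⌊φ * n⌋ : ℝ) = _
  obtain rfl | hk := k.eq_zero_or_pos
  · simp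
  have hfib : 1 ≤ Nat.fib k := Nat.fib_pos.mpr hk
  have hIcc : Icc 1 (Nat.fib k - 1) = Ico 1 (Nat.fib k) := by ext; simp only [mem_Icc, mem_Ico]; omega
  have hpair := two_nsmul_sum_Ico_one_of_add_reflect (f := fun n : ℕ ↦ (⌊φ * n⌋ : ℝ))
    (N := Nat.fib k) (c := (Nat.fib (k + 1) : ℝ) - 1) fun n hn ↦ by
      rw [mem_Ico] at hn
      exact_mod_cast floor_goldenRatio_mul_add_floor_goldenRatio_mul_fib_sub hn.1 hn.2
  rw [nsmul_eq_mul, nsmul_eq_mul, Nat.cast_sub hfib, Nat.cast_one, Nat.cast_two] at hpair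
  rw [hIcc]
  linarith

theorem A_k_one (k : ℕ) (hk : 1 ≤ k) :
    (∑ n ∈ Finset.Icc 1 (Nat.fib k - 1), (⌊(1 + Real.sqrt 5) / 2 * (n : ℝ)⌋ : ℝ)) =
      (1 / 2) * ((Nat.fib (k + 1) : ℝ) - 1) * ((Nat.fib k : ℝ) - 1) :=
  A_k_one_general k
end

section
/- For every integer k ≥ 1, ∑_{n=1}^{F_k − 1} ⌊φ² n⌋ = (1/2)(F_{k+2} − 1)(F_k − 1). -/
/-!
Since `φ² = φ + 1`, Binet's formula gives `φ² n + φ² m = F_{k+2} - ψ^k` whenever `n + m = F_k`.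
For `0 < n < F_k` the number `n φ` stays at distance more than `|ψ|^k` from every integer `j`:
the product `(n φ - j)(n ψ - j) = j² - j n - n²` is a nonzero integer, while
`|n ψ - j| ≤ |n φ - j| + (F_k - 1) √5` and `√5 F_k = φ^k - ψ^k`. So both fractional parts lie in
`(|ψ|^k, 1 - |ψ|^k)`, which forces `⌊φ² n⌋ + ⌊φ² m⌋ = F_{k+2} - 1`. Pairing `n` with `F_k - n`
in the sum gives the formula.
-/

open Finset Real goldenRatio

theorem Finset.two_nsmul_sum_Icc_of_add_reflect {M : Type*} [AddCommMonoid M] {N : ℕ}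
    (f : ℕ → M) (c : M) (h : ∀ n ∈ Icc 1 N, f n + f (N + 1 - n) = c) :
    2 • ∑ n ∈ Icc 1 N, f n = N • c := calc
  2 • ∑ n ∈ Icc 1 N, f n = ∑ n ∈ Icc 1 N, f n + ∑ n ∈ Icc 1 N, f (N + 1 - n) := by
    rw [two_nsmul, sum_nbij' (fun n ↦ N + 1 - n) (fun n ↦ N + 1 - n)]
    all_goals intro n hn; simp only [mem_Icc] at hn ⊢
    all_goals first | omega | congr 1; omega
  _ = ∑ n ∈ Icc 1 N, (f n + f (N + 1 - n)) := sum_add_distrib.symm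
  _ = N • c := by rw [sum_congr rfl h, sum_const, Nat.card_Icc, Nat.add_sub_cancel]

theorem Int.fract_mem_Ioo_of_forall_lt_abs_sub {x r : ℝ} (h : ∀ j : ℤ, r < |x - j|) :
    Int.fract x ∈ Set.Ioo r (1 - r) := by
  have below := h ⌊x⌋
  have above := h (⌊x⌋ + 1)
  rw [← Int.fract, abs_of_nonneg (Int.fract_nonneg x)] at below
  rw [Int.cast_add, Int.cast_one, ← sub_sub, ← Int.fract,
    abs_of_neg (sub_neg.2 (Int.fract_lt_one x))] at above
  constructor <;> linarith

theorem Int.floor_add_floor_eq_sub_one_of_fract_mem_Ioo {x y r e : ℝ} {N : ℤ}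
    (hx : Int.fract x ∈ Set.Ioo r (1 - r)) (hy : Int.fract y ∈ Set.Ioo r (1 - r))
    (hxy : x + y = N - e) (he : |e| ≤ r) : ⌊x⌋ + ⌊y⌋ = N - 1 := by
  obtain ⟨hx₀, hx₁⟩ := hx
  obtain ⟨hy₀, hy₁⟩ := hy
  have hsum : ((⌊x⌋ + ⌊y⌋ : ℤ) : ℝ) = N - e - Int.fract x - Int.fract y := by
    rw [Int.cast_add, ← hxy, Int.fract, Int.fract]; ring
  have hlow : ((N - 2 : ℤ) : ℝ) < ((⌊x⌋ + ⌊y⌋ : ℤ) : ℝ) := by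
    rw [hsum]; push_cast; linarith [le_abs_self e, abs_nonneg e]
  have hhigh : ((⌊x⌋ + ⌊y⌋ : ℤ) : ℝ) < N := by
    rw [hsum]; linarith [neg_abs_le e, abs_nonneg e]
  have := Int.cast_lt.1 hlow
  have := Int.cast_lt.1 hhigh
  omega

theorem goldenRatio_sq_mul_fib (k : ℕ) : φ ^ 2 * Nat.fib k = Nat.fib (k + 2) - ψ ^ k := by
  rw [goldenRatio_sq, ← fib_succ_sub_goldenRatio_mul_fib, Nat.fib_add_two, Nat.cast_add]
  ring

theorem one_le_abs_natCast_mul_goldenRatio_sub_mul_abs_natCast_mul_goldenConj_sub {n : ℕ}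
    (hn : n ≠ 0) (j : ℤ) : 1 ≤ |n * φ - j| * |n * ψ - j| := by
  have hnorm : (n * φ - j) * (n * ψ - j) = ((j ^ 2 - j * n - n ^ 2 : ℤ) : ℝ) := by
    push_cast
    linear_combination (n : ℝ) ^ 2 * goldenRatio_mul_goldenConj
      - (j : ℝ) * n * goldenRatio_add_goldenConj
  have hφ := (goldenRatio_irrational.natCast_mul hn).ne_int j
  have hψ := (goldenConj_irrational.natCast_mul hn).ne_int j
  have hne : j ^ 2 - j * n - n ^ 2 ≠ 0 := by
    rw [← Int.cast_ne_zero (α := ℝ), ← hnorm]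
    exact mul_ne_zero (sub_ne_zero.2 hφ) (sub_ne_zero.2 hψ)
  rw [← abs_mul, hnorm, ← Int.cast_abs, ← Int.cast_one, Int.cast_le]
  exact Int.one_le_abs hne

theorem abs_goldenConj_pow_lt_abs_natCast_mul_goldenRatio_sub {k n : ℕ} (hn : n ≠ 0)
    (hnk : n < Nat.fib k) (j : ℤ) : |ψ| ^ k < |n * φ - j| := by
  have hr0 : 0 < |ψ| ^ k := pow_pos (abs_pos.2 goldenConj_ne_zero) k
  have hr1 : |ψ| ^ k ≤ 1 :=
    pow_le_one₀ (abs_nonneg _) (abs_le.2 ⟨neg_one_lt_goldenConj.le, by linarith [goldenConj_neg]⟩)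
  have hφr : φ ^ k * |ψ| ^ k = 1 := by
    rw [← abs_of_pos goldenRatio_pos, ← mul_pow, ← abs_mul, goldenRatio_mul_goldenConj, abs_neg,
      abs_one, one_pow]
  have hψr : -ψ ^ k ≤ |ψ| ^ k := by rw [← abs_pow]; exact neg_le_abs _
  set r := |ψ| ^ k
  set d := |n * φ - j|
  by_contra! hd
  have hsqrt : 2 < √5 := (Real.lt_sqrt zero_le_two).2 (by norm_num)
  have hn' : (n : ℝ) ≤ Nat.fib k - 1 := by
    rw [le_sub_iff_add_le]; exact_mod_cast hnk
  have hfib : √5 * Nat.fib k = φ ^ k - ψ ^ k := by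
    rw [coe_fib_eq]; field_simp
  have hconj : |n * ψ - j| ≤ d + n * √5 := by
    rw [← goldenRatio_sub_goldenConj]
    calc |n * ψ - j| = |(n * φ - j) - n * (φ - ψ)| := by ring_nf
      _ ≤ d + |n * (φ - ψ)| := abs_sub _ _
      _ = d + n * (φ - ψ) := by
        rw [abs_of_nonneg (mul_nonneg n.cast_nonneg (by linarith [goldenRatio_pos, goldenConj_neg]))]
  have hn5 : n * √5 ≤ φ ^ k - ψ ^ k - √5 := by nlinarith
  have := one_le_abs_natCast_mul_goldenRatio_sub_mul_abs_natCast_mul_goldenConj_sub hn j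
  nlinarith [abs_nonneg (n * ψ - j)]

theorem floor_goldenRatio_sq_mul_add_floor_goldenRatio_sq_mul {k n m : ℕ} (hn : n ≠ 0)
    (hm : m ≠ 0) (hnm : n + m = Nat.fib k) :
    ⌊φ ^ 2 * n⌋ + ⌊φ ^ 2 * m⌋ = (Nat.fib (k + 2) : ℤ) - 1 := by
  have hfract {a : ℕ} (ha : a ≠ 0) (hak : a < Nat.fib k) :
      Int.fract (φ ^ 2 * a) ∈ Set.Ioo (|ψ| ^ k) (1 - |ψ| ^ k) := by
    refine Int.fract_mem_Ioo_of_forall_lt_abs_sub fun j ↦ ?_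
    have hshift : φ ^ 2 * a - j = a * φ - ((j - a : ℤ) : ℝ) := by
      push_cast; rw [goldenRatio_sq]; ring
    rw [hshift]
    exact abs_goldenConj_pow_lt_abs_natCast_mul_goldenRatio_sub ha hak _
  refine Int.floor_add_floor_eq_sub_one_of_fract_mem_Ioo (hfract hn (by omega))
    (hfract hm (by omega)) ?_ (abs_pow ψ k).le
  rw [← mul_add, ← Nat.cast_add, hnm, goldenRatio_sq_mul_fib, Int.cast_natCast]

theorem A'_k_one (k : ℕ) (hk : 1 ≤ k) :
    (∑ n ∈ Finset.Icc 1 (Nat.fib k - 1), (⌊((1 + Real.sqrt 5) / 2) ^ 2 * (n : ℝ)⌋ : ℝ)) =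
      (1 / 2) * ((Nat.fib (k + 2) : ℝ) - 1) * ((Nat.fib k : ℝ) - 1) := by
  have hfib : 1 ≤ Nat.fib k := Nat.fib_pos.2 hk
  have hpair : ∀ n ∈ Icc 1 (Nat.fib k - 1),
      (⌊φ ^ 2 * n⌋ : ℝ) + ⌊φ ^ 2 * ((Nat.fib k - 1 + 1 - n : ℕ) : ℝ)⌋ = Nat.fib (k + 2) - 1 := by
    intro n hn
    rw [mem_Icc] at hn
    exact_mod_cast floor_goldenRatio_sq_mul_add_floor_goldenRatio_sq_mul (by omega) (by omega)
      (by omega)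
  have htwice := two_nsmul_sum_Icc_of_add_reflect _ _ hpair
  rw [nsmul_eq_mul, nsmul_eq_mul, Nat.cast_sub hfib] at htwice
  push_cast at htwice
  linarith
end

section
/- For every integer k ≥ 1, ∑_{n=1}^{F_{2k−1} − 1} ⌊φ n⌋³ = (1/4)(F_{2k−1} − 1)(F_{2k} − 1) · (1/5)(L_{4k} − 3L_{2k+1} − L_{2k} + 3). -/
/-!
For odd `m`, the numbers `q = F_m` and `p = F_{m+1}` satisfy `q φ - p = φ^(-m)`, which is small
enough that `⌊φ n⌋ = ⌊p n / q⌋` for `0 < n < q`; Cassini's identity reads `p² + 1 = q F_{m+2}`.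
With `σ n = p n % q` we have `q ⌊p n / q⌋ = p n - σ n`, and since `p² ≡ -1 (mod q)`, the map
`(n, σ n) ↦ (σ n, q - n)` permutes these pairs and its fourth power is the identity. Summing
`(p a - b)³` over the four images of a pair leaves only terms in `a` alone or `b` alone, which
reduces the sum of cubes to `∑ n (q - n) = (q³ - q) / 6`.
-/

open Finset Real goldenRatio
open Nat (fib fib_add_two fib_two_mul_add_one fib_le_fib_succ)

def lucas : ℕ → ℕ
  | 0 => 2
  | 1 => 1
  | n + 2 => lucas (n + 1) + lucas n

theorem sum_Icc_mul_sub (q t : ℕ) :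
    6 * ∑ n ∈ Icc 1 t, (n : ℤ) * (q - n) = t * (t + 1) * (3 * q - 2 * t - 1) := by
  induction t with
  | zero => simp
  | succ t ih =>
    rw [sum_Icc_succ_top (by omega), mul_add, ih]
    push_cast
    ring

section MulMod

variable {p q : ℕ}

theorem mul_mod_mul_mod_eq_sub (hpq : q ∣ p ^ 2 + 1) {n : ℕ} (hn : n ∈ Icc 1 (q - 1)) :
    p * (p * n % q) % q = q - n := by
  rw [mem_Icc] at hn
  have hq : 0 < q := by omega
  have hmod : p * (p * n % q) % q + n ≡ 0 [MOD q] :=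
    calc p * (p * n % q) % q + n ≡ p * (p * n) + n [MOD q] :=
          ((Nat.mod_modEq _ _).trans ((Nat.mod_modEq _ _).mul_left p)).add_right n
      _ = (p ^ 2 + 1) * n := by ring
      _ ≡ 0 [MOD q] := (Nat.modEq_zero_iff_dvd).2 (hpq.mul_right n)
  have heq := Nat.eq_of_dvd_of_lt_two_mul (by omega) ((Nat.modEq_zero_iff_dvd).1 hmod)
    (by have := Nat.mod_lt (p * (p * n % q)) hq; omega)
  omega

theorem mul_mod_mem_Icc (hpq : q ∣ p ^ 2 + 1) {n : ℕ} (hn : n ∈ Icc 1 (q - 1)) :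
    p * n % q ∈ Icc 1 (q - 1) := by
  have h := mul_mod_mul_mod_eq_sub hpq hn
  rw [mem_Icc] at hn ⊢
  have := Nat.mod_lt (p * n) (show 0 < q by omega)
  refine ⟨Nat.pos_of_ne_zero fun h0 => ?_, by omega⟩
  rw [h0, mul_zero, Nat.zero_mod] at h
  omega

theorem sum_comp_mul_mod {M : Type*} [AddCommMonoid M] (hpq : q ∣ p ^ 2 + 1) (g : ℕ → M) :
    ∑ n ∈ Icc 1 (q - 1), g (p * n % q) = ∑ n ∈ Icc 1 (q - 1), g n := by
  have hsub : ∀ n ∈ Icc 1 (q - 1), q - n ∈ Icc 1 (q - 1) := fun n hn => by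
    rw [mem_Icc] at hn ⊢; omega
  refine sum_nbij (p * · % q) (fun n hn => mul_mod_mem_Icc hpq hn) (fun a ha b hb hab => ?_)
    (fun m hm => ⟨p * (q - m) % q, mul_mod_mem_Icc hpq (hsub m hm), ?_⟩) fun _ _ => rfl
  · have h := congrArg (p * · % q) hab
    simp only [mul_mod_mul_mod_eq_sub hpq ha, mul_mod_mul_mod_eq_sub hpq hb] at h
    rw [mem_coe, mem_Icc] at ha hb
    omega
  · rw [mem_coe] at hm
    show p * (p * (q - m) % q) % q = m
    rw [mul_mod_mul_mod_eq_sub hpq (hsub m hm)]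
    rw [mem_Icc] at hm
    omega

theorem sum_mul_mod_rotate {M : Type*} [AddCommMonoid M] (hpq : q ∣ p ^ 2 + 1)
    (F : ℤ → ℤ → M) :
    ∑ n ∈ Icc 1 (q - 1), F n ↑(p * n % q) = ∑ n ∈ Icc 1 (q - 1), F ↑(p * n % q) (q - n) := by
  rw [← sum_comp_mul_mod hpq fun m => F m ↑(p * m % q)]
  refine sum_congr rfl fun n hn => ?_
  rw [mul_mod_mul_mod_eq_sub hpq hn, Nat.cast_sub (by rw [mem_Icc] at hn; omega)]

theorem sum_mul_mod_orbit {M : Type*} [AddCommMonoid M] (hpq : q ∣ p ^ 2 + 1)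
    (F : ℤ → ℤ → M) :
    4 • ∑ n ∈ Icc 1 (q - 1), F n ↑(p * n % q) =
      ∑ n ∈ Icc 1 (q - 1), (F n ↑(p * n % q) + F ↑(p * n % q) (q - n) +
        F (q - n) (q - ↑(p * n % q)) + F (q - ↑(p * n % q)) n) := by
  have h1 := sum_mul_mod_rotate hpq F
  have h2 := sum_mul_mod_rotate hpq fun a b => F b (q - a)
  have h3 := sum_mul_mod_rotate hpq fun a b => F (q - a) (q - b)
  simp only [sub_sub_cancel] at h3
  rw [sum_add_distrib, sum_add_distrib, sum_add_distrib, ← h3, ← h2, ← h1]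
  abel

end MulMod

theorem sum_mul_div_cube {p q c : ℕ} (h : p ^ 2 + 1 = q * c) :
    4 * ∑ n ∈ Icc 1 (q - 1), ((p * n / q : ℕ) : ℤ) ^ 3 =
      (q - 1) * (p - 1) * (p ^ 2 - p + 1 - c) := by
  have hpq : q ∣ p ^ 2 + 1 := ⟨c, h⟩
  have hq : q ≠ 0 := by rintro rfl; simp at h
  set F : ℤ → ℤ → ℤ := fun a b => (p * a - b) ^ 3
  set r : ℤ → ℤ := fun x =>
    (p - 1) * ((2 * p ^ 2 - p + 2) * q ^ 2 - 6 * (p ^ 2 + 1) * (x * (q - x)))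
  have hF : ∀ n : ℕ, F n ↑(p * n % q) = q ^ 3 * ((p * n / q : ℕ) : ℤ) ^ 3 := fun n => by
    have : (q : ℤ) * ↑(p * n / q) + ↑(p * n % q) = p * n := mod_cast Nat.div_add_mod (p * n) q
    simp only [F]
    rw [← mul_pow, ← this]
    ring
  have horbit : ∀ a b : ℤ,
      2 * (F a b + F b (q - a) + F (q - a) (q - b) + F (q - b) a) = q * (r a + r b) := by
    intro a b; simp only [F, r]; ring
  have hr : ∑ n ∈ Icc 1 (q - 1), r n =
      (p - 1) * q * (q - 1) * ((2 * p ^ 2 - p + 2) * q - (p ^ 2 + 1) * (q + 1)) := by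
    have hs := sum_Icc_mul_sub q (q - 1)
    simp only [r, ← mul_sum, sum_sub_distrib, sum_const, Nat.card_Icc, nsmul_eq_mul]
    push_cast [Nat.cast_sub (Nat.one_le_iff_ne_zero.2 hq)] at hs ⊢
    linear_combination (-(p - 1) * (p ^ 2 + 1) : ℤ) * hs
  have key : 8 * (q ^ 3 * ∑ n ∈ Icc 1 (q - 1), ((p * n / q : ℕ) : ℤ) ^ 3) =
      2 * q * ∑ n ∈ Icc 1 (q - 1), r n := by
    have horb := sum_mul_mod_orbit hpq F
    rw [nsmul_eq_mul, Nat.cast_ofNat] at horb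
    calc 8 * (q ^ 3 * ∑ n ∈ Icc 1 (q - 1), ((p * n / q : ℕ) : ℤ) ^ 3)
        = 2 * (4 * ∑ n ∈ Icc 1 (q - 1), F n ↑(p * n % q)) := by
          rw [mul_sum, sum_congr rfl fun n _ => hF n]; ring
      _ = ∑ n ∈ Icc 1 (q - 1), q * (r n + r ↑(p * n % q)) := by
          rw [horb, mul_sum]; exact sum_congr rfl fun n _ => horbit _ _
      _ = 2 * q * ∑ n ∈ Icc 1 (q - 1), r n := by
          rw [← mul_sum, sum_add_distrib, sum_comp_mul_mod hpq fun m : ℕ => r m]; ring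
  have hc : (p ^ 2 + 1 : ℤ) = q * c := mod_cast h
  have hq3 : (2 * q ^ 3 : ℤ) ≠ 0 := by positivity
  refine mul_left_cancel₀ hq3 ?_
  linear_combination key + 2 * q * hr - 2 * q ^ 2 * (p - 1) * (q - 1) * hc

theorem Int.floor_mul_natCast_eq_div {K : Type*} [Field K] [LinearOrder K] [IsOrderedRing K]
    [FloorRing K] {x : K} {p q n : ℕ} (hq : q ≠ 0) (hlo : (p : K) ≤ q * x)
    (hhi : (q * x - p) * n < 1) : ⌊x * n⌋ = ((p * n / q : ℕ) : ℤ) := by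
  have hq' : (q : K) ≠ 0 := Nat.cast_ne_zero.2 hq
  have hfloor : ⌊q * x * n⌋ = ((p * n : ℕ) : ℤ) := by
    rw [Int.floor_eq_iff]
    push_cast
    constructor <;> nlinarith [(Nat.cast_nonneg n : (0 : K) ≤ n)]
  calc ⌊x * n⌋ = ⌊q * x * n / q⌋ := by rw [mul_assoc, mul_div_cancel_left₀ _ hq']
    _ = _ := by rw [Int.floor_div_natCast, hfloor, Int.natCast_div]

theorem floor_goldenRatio_mul_eq_div {m n : ℕ} (hm : Odd m) (hn : n < fib m) :
    ⌊φ * n⌋ = ((fib (m + 1) * n / fib m : ℕ) : ℤ) := by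
  have hgap : fib m * φ - fib (m + 1) = (-ψ) ^ m := by
    rw [hm.neg_pow, ← fib_succ_sub_goldenRatio_mul_fib]; ring
  have hfib : (fib m : ℝ) ≤ φ ^ m := by
    rw [← fib_succ_sub_goldenConj_mul_fib]
    have : (fib m : ℝ) ≤ fib (m + 1) := mod_cast fib_le_fib_succ
    nlinarith [goldenConj_neg, (Nat.cast_nonneg (fib m) : (0 : ℝ) ≤ _)]
  refine Int.floor_mul_natCast_eq_div (by omega) ?_ ?_
  · have := pow_nonneg (neg_nonneg.2 goldenConj_neg.le) m
    linarith
  · have hn' : (n : ℝ) < φ ^ m := (Nat.cast_lt.2 hn).trans_le hfib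
    calc (fib m * φ - fib (m + 1)) * n = (-ψ) ^ m * n := by rw [hgap]
      _ < (-ψ) ^ m * φ ^ m := mul_lt_mul_of_pos_left hn' (pow_pos (neg_pos.2 goldenConj_neg) m)
      _ = 1 := by rw [← mul_pow, neg_mul, goldenConj_mul_goldenRatio, neg_neg, one_pow]

theorem fib_add_one_sq_add_one_of_odd {m : ℕ} (hm : Odd m) :
    fib (m + 1) ^ 2 + 1 = fib m * fib (m + 2) := by
  have h := Int.fib_succ_mul_fib_pred_sub_fib_sq ((m + 1 : ℕ) : ℤ)
  rw [Int.natAbs_natCast, hm.add_one.neg_one_pow,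
    show ((m + 1 : ℕ) : ℤ) + 1 = (m + 2 : ℕ) by push_cast; ring,
    show ((m + 1 : ℕ) : ℤ) - 1 = m by push_cast; ring] at h
  simp only [Int.fib_natCast] at h
  have : ((fib (m + 1) ^ 2 + 1 : ℕ) : ℤ) = (fib m * fib (m + 2) : ℕ) := by push_cast; linarith
  exact_mod_cast this

theorem lucas_add_one : ∀ n, lucas (n + 1) = fib n + fib (n + 2)
  | 0 => rfl
  | 1 => rfl
  | n + 2 => by
    rw [show lucas (n + 2 + 1) = lucas (n + 1 + 1) + lucas (n + 1) from rfl, lucas_add_one n,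
      lucas_add_one (n + 1)]
    simp only [fib_add_two]
    ring

theorem lucas_two_mul_add_two (m : ℕ) :
    lucas (2 * m + 2) = fib m ^ 2 + 2 * fib (m + 1) ^ 2 + fib (m + 2) ^ 2 := by
  rw [lucas_add_one, show 2 * m + 1 + 2 = 2 * (m + 1) + 1 by ring, fib_two_mul_add_one,
    fib_two_mul_add_one]
  ring

theorem sum_floor_goldenRatio_mul_cube {m : ℕ} (hm : Odd m) :
    4 * ∑ n ∈ Icc 1 (fib m - 1), ⌊φ * n⌋ ^ 3 =
      (fib m - 1) * (fib (m + 1) - 1) * (fib (m + 1) ^ 2 - fib (m + 1) + 1 - fib (m + 2)) := by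
  rw [← sum_mul_div_cube (fib_add_one_sq_add_one_of_odd hm)]
  congr 1
  refine sum_congr rfl fun n hn => ?_
  rw [floor_goldenRatio_mul_eq_div hm (by rw [mem_Icc] at hn; omega)]

theorem A_odd_three (k : ℕ) (hk : 1 ≤ k) :
    (∑ n ∈ Finset.Icc 1 (Nat.fib (2 * k - 1) - 1), (⌊(1 + Real.sqrt 5) / 2 * (n : ℝ)⌋ : ℝ) ^ 3) =
      (1 / 4) * ((Nat.fib (2 * k - 1) : ℝ) - 1) * ((Nat.fib (2 * k) : ℝ) - 1) *
        ((1 / 5) * ((lucas (4 * k) : ℝ) - 3 * (lucas (2 * k + 1) : ℝ) - (lucas (2 * k) : ℝ) + 3)) := by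
  obtain ⟨j, rfl⟩ := Nat.exists_eq_add_of_le' hk
  rw [show 2 * (j + 1) - 1 = 2 * j + 1 by omega, show 2 * (j + 1) + 1 = 2 * j + 1 + 2 by omega,
    show 4 * (j + 1) = 2 * (2 * j + 1) + 2 by omega, show 2 * (j + 1) = 2 * j + 1 + 1 by omega]
  generalize hm : 2 * j + 1 = m
  replace hm : Odd m := hm ▸ odd_two_mul_add_one j
  rw [lucas_two_mul_add_two, lucas_add_one, lucas_add_one]
  have hsum := congrArg (Int.cast : ℤ → ℝ) (sum_floor_goldenRatio_mul_cube hm)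
  have hcassini : (fib (m + 1) ^ 2 + 1 : ℝ) = fib m * fib (m + 2) :=
    mod_cast fib_add_one_sq_add_one_of_odd hm
  simp only [fib_add_two] at hsum hcassini ⊢
  push_cast at hsum hcassini ⊢
  linear_combination (1 / 4 : ℝ) * hsum + (fib m - 1) * (fib (m + 1) - 1) / 10 * hcassini
end
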